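/- arXiv:2106.06892 — 6 statements merged into one kernel-verified Lean document; each statement's English description precedes it below -/
import Mathlib

section
/- Let k be a positive integer and z_1,...,z_k ∈ [0,1] with ∑_{i=1}^k z_i ≤ 1. Let w_1 ≥ w_2 ≥ ... ≥ w_k ≥ 0 be nonnegative reals. Then ∑_{i=1}^k w_i z_i ∏_{j=1}^{i-1} (1 - z_j) ≥ (1 - 1/e) ∑_{i=1}^k w_i z_i. -/
theorem stmt_0 (k : ℕ) (hk : 0 < k) (z w : ℕ → ℝ)
    (hz : ∀ i < k, z i ∈ Set.Icc (0:ℝ) 1)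
    (hzsum : ∑ i ∈ Finset.range k, z i ≤ 1)
    (hwmono : ∀ i j, i ≤ j → j < k → w j ≤ w i)
    (hwnn : ∀ i < k, 0 ≤ w i) :
    ∑ i ∈ Finset.range k, w i * z i * ∏ j ∈ Finset.range i, (1 - z j)
      ≥ (1 - 1 / Real.exp 1) * ∑ i ∈ Finset.range k, w i * z i := by
  set c : ℕ → ℝ := fun i => z i * ∏ j ∈ Finset.range i, (1 - z j) - (1 - 1 / Real.exp 1) * z i
    with hc
  -- prefix sums of c are nonnegative
  have key : ∀ m, m ≤ k → 0 ≤ ∑ i ∈ Finset.range m, c i := by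
    intro m hm
    have hz0 : ∀ i < k, 0 ≤ z i := fun i hi => (hz i hi).1
    have hz1 : ∀ i < k, z i ≤ 1 := fun i hi => (hz i hi).2
    -- telescoping
    have tel : ∑ i ∈ Finset.range m, z i * ∏ j ∈ Finset.range i, (1 - z j)
        = 1 - ∏ j ∈ Finset.range m, (1 - z j) := by
      have := Finset.sum_range_sub' (fun n => ∏ j ∈ Finset.range n, (1 - z j)) m
      simp only [Finset.prod_range_zero] at this
      rw [← this]
      apply Finset.sum_congr rfl
      intro i _
      rw [Finset.prod_range_succ]
      ring
    set s : ℝ := ∑ i ∈ Finset.range m, z i with hs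
    have hs0 : 0 ≤ s := Finset.sum_nonneg fun i hi =>
      hz0 i (lt_of_lt_of_le (Finset.mem_range.mp hi) hm)
    have hs1 : s ≤ 1 := le_trans (Finset.sum_le_sum_of_subset_of_nonneg
      (Finset.range_subset_range.mpr hm) (fun i hi _ => hz0 i (Finset.mem_range.mp hi))) hzsum
    -- product ≤ exp(-s)
    have prodle : ∏ j ∈ Finset.range m, (1 - z j) ≤ Real.exp (-s) := by
      rw [hs, ← Finset.sum_neg_distrib, Real.exp_sum]
      apply Finset.prod_le_prod
      · intro i hi
        have := hz1 i (lt_of_lt_of_le (Finset.mem_range.mp hi) hm)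
        linarith
      · intro i hi
        have := Real.add_one_le_exp (-z i)
        linarith
    -- convexity: exp(-s) ≤ (1-s) + s * exp(-1)
    have conv : Real.exp (-s) ≤ (1 - s) + s * Real.exp (-1) := by
      have h := convexOn_exp.2 (Set.mem_univ (0:ℝ)) (Set.mem_univ (-1:ℝ))
        (by linarith : (0:ℝ) ≤ 1 - s) hs0 (by ring)
      simp only [smul_eq_mul, mul_zero, mul_neg_one, zero_add, Real.exp_zero, mul_one] at h
      calc Real.exp (-s) = Real.exp ((1-s) * 0 + s * (-1)) := by ring_nf
        _ ≤ (1 - s) * 1 + s * Real.exp (-1) := by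
            have h := convexOn_exp.2 (Set.mem_univ (0:ℝ)) (Set.mem_univ (-1:ℝ))
              (by linarith : (0:ℝ) ≤ 1 - s) hs0 (by ring)
            simpa [smul_eq_mul, Real.exp_zero] using h
        _ = (1 - s) + s * Real.exp (-1) := by ring
    have hexpneg : Real.exp (-1) = 1 / Real.exp 1 := by
      rw [Real.exp_neg]; ring
    have : (1 - 1 / Real.exp 1) * s ≤ 1 - ∏ j ∈ Finset.range m, (1 - z j) := by
      rw [hexpneg] at conv
      nlinarith [prodle]
    have sumsplit : ∑ i ∈ Finset.range m, c i
        = (∑ i ∈ Finset.range m, z i * ∏ j ∈ Finset.range i, (1 - z j))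
          - (1 - 1 / Real.exp 1) * s := by
      rw [hc, Finset.sum_sub_distrib, ← Finset.mul_sum, hs]
    rw [sumsplit, tel]
    linarith
  -- Abel summation
  rw [ge_iff_le, ← sub_nonneg]
  have rw1 : (∑ i ∈ Finset.range k, w i * z i * ∏ j ∈ Finset.range i, (1 - z j))
      - (1 - 1 / Real.exp 1) * ∑ i ∈ Finset.range k, w i * z i
      = ∑ i ∈ Finset.range k, w i * c i := by
    rw [hc, Finset.mul_sum, ← Finset.sum_sub_distrib]
    apply Finset.sum_congr rfl
    intro i _
    ring
  rw [rw1]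
  have parts := Finset.sum_range_by_parts w c k
  simp only [smul_eq_mul] at parts
  rw [parts]
  have h1 : 0 ≤ w (k - 1) * ∑ i ∈ Finset.range k, c i := by
    apply mul_nonneg
    · exact hwnn (k - 1) (Nat.sub_lt hk one_pos)
    · exact key k le_rfl
  have h2 : ∑ i ∈ Finset.range (k - 1), (w (i + 1) - w i) * ∑ j ∈ Finset.range (i + 1), c j
      ≤ 0 := by
    apply Finset.sum_nonpos
    intro i hi
    have hik : i + 1 < k := by
      have := Finset.mem_range.mp hi
      omega
    apply mul_nonpos_of_nonpos_of_nonneg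
    · have := hwmono i (i + 1) (Nat.le_succ i) hik
      linarith
    · exact key (i + 1) (le_of_lt hik)
  linarith
end

section
/- ∫_0^1 e^{-2x} (e^{-x} + x e^{-x})^2 dx = ∫_0^1 e^{-4x}(1+x)^2 dx, and this quantity is strictly greater than 0.38 and strictly less than 0.39. -/
lemma integrand_eq (x : ℝ) :
    Real.exp (-2 * x) * (Real.exp (-x) + x * Real.exp (-x)) ^ 2
      = Real.exp (-4 * x) * (1 + x) ^ 2 := by
  have h : Real.exp (-x) + x * Real.exp (-x) = Real.exp (-x) * (1 + x) := by ring
  rw [h, mul_pow, sq (Real.exp (-x)), ← mul_assoc, ← Real.exp_add, ← Real.exp_add]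
  ring_nf

noncomputable def F (x : ℝ) : ℝ := -Real.exp (-4 * x) * (x ^ 2 / 4 + 5 * x / 8 + 13 / 32)

lemma hF (x : ℝ) : HasDerivAt F (Real.exp (-4 * x) * (1 + x) ^ 2) x := by
  have h1 : HasDerivAt (fun x : ℝ => Real.exp (-4 * x)) (Real.exp (-4 * x) * (-4)) x := by
    have := (((hasDerivAt_id x).const_mul (-4))).exp
    simpa [id, mul_comm] using this
  have h2 : HasDerivAt (fun x : ℝ => x ^ 2 / 4 + 5 * x / 8 + 13 / 32)
      (2 * x / 4 + 5 / 8) x := by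
    have := (((hasDerivAt_pow 2 x).div_const 4).add
        (((hasDerivAt_id x).const_mul 5).div_const 8)).add_const (13/32 : ℝ)
    simpa [id] using this
  have := (h1.neg.mul h2)
  convert this using 1
  · rfl
  · rfl
  · funext y
    simp only [F, Pi.mul_apply, Pi.neg_apply]
  · simp only [Pi.neg_apply]
    ring

lemma integral_val :
    (∫ x in (0:ℝ)..1, Real.exp (-4 * x) * (1 + x) ^ 2)
      = 13 / 32 - Real.exp (-4) * (41 / 32) := by
  have hcont : IntervalIntegrable (fun x => Real.exp (-4 * x) * (1 + x) ^ 2)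
      MeasureTheory.volume 0 1 := by
    apply Continuous.intervalIntegrable
    continuity
  rw [intervalIntegral.integral_eq_sub_of_hasDerivAt (fun x _ => hF x) hcont]
  simp [F]
  ring

theorem stmt_4 :
    (∫ x in (0:ℝ)..1, Real.exp (-2 * x) * (Real.exp (-x) + x * Real.exp (-x)) ^ 2)
      = (∫ x in (0:ℝ)..1, Real.exp (-4 * x) * (1 + x) ^ 2)
    ∧ 0.38 < ∫ x in (0:ℝ)..1, Real.exp (-4 * x) * (1 + x) ^ 2
    ∧ (∫ x in (0:ℝ)..1, Real.exp (-4 * x) * (1 + x) ^ 2) < 0.39 := by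
  have heq : (∫ x in (0:ℝ)..1, Real.exp (-2 * x) * (Real.exp (-x) + x * Real.exp (-x)) ^ 2)
      = (∫ x in (0:ℝ)..1, Real.exp (-4 * x) * (1 + x) ^ 2) := by
    apply intervalIntegral.integral_congr
    intro x _
    exact integrand_eq x
  have hv := integral_val
  have he1 : (2.7182818 : ℝ) < Real.exp 1 := by
    have := Real.exp_one_gt_d9; linarith
  have he2 : Real.exp 1 < 2.7182819 := by
    have := Real.exp_one_lt_d9; linarith
  have hepos : (0:ℝ) < Real.exp 1 := Real.exp_pos 1
  have h4 : Real.exp (-4) = ((Real.exp 1) ^ (4:ℕ))⁻¹ := by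
    rw [← Real.exp_nat_mul, ← Real.exp_neg]
    norm_num
  have hl : (48.81 : ℝ) < (Real.exp 1) ^ (4:ℕ) := by
    nlinarith [pow_lt_pow_left₀ he1 (by norm_num : (0:ℝ) ≤ 2.7182818) (by norm_num : (4:ℕ) ≠ 0)]
  have hu : (Real.exp 1) ^ (4:ℕ) < 78.8 := by
    nlinarith [pow_lt_pow_left₀ he2 (le_of_lt hepos) (by norm_num : (4:ℕ) ≠ 0)]
  have hpos : (0:ℝ) < (Real.exp 1) ^ (4:ℕ) := pow_pos hepos 4
  have hIpos : (0:ℝ) < ((Real.exp 1) ^ (4:ℕ))⁻¹ := inv_pos.mpr hpos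
  have hinv : ((Real.exp 1) ^ (4:ℕ))⁻¹ * (Real.exp 1) ^ (4:ℕ) = 1 :=
    inv_mul_cancel₀ (ne_of_gt hpos)
  refine ⟨heq, ?_, ?_⟩
  · rw [hv, h4]
    nlinarith [mul_lt_mul_of_pos_left hl hIpos]
  · rw [hv, h4]
    nlinarith [mul_lt_mul_of_pos_left hu hIpos]
end

section
/- For any fixed x ∈ (0,1) and α ∈ [1/2, 1], the function z ↦ ln(1 - x z (1 - α z)) is convex on [0,1]. -/
theorem stmt_8 (x α : ℝ) (hx : x ∈ Set.Ioo (0:ℝ) 1) (hα : α ∈ Set.Icc (1/2 : ℝ) 1) :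
    ConvexOn ℝ (Set.Icc (0:ℝ) 1)
      (fun z => Real.log (1 - x * z * (1 - α * z))) := by
  obtain ⟨hx0, hx1⟩ := hx
  obtain ⟨hα0, hα1⟩ := hα
  have hαpos : (0:ℝ) < α := lt_of_lt_of_le (by norm_num) hα0
  have hfpos : ∀ z : ℝ, 0 < 1 - x * z * (1 - α * z) := by
    intro z
    nlinarith [sq_nonneg (2*α*z - 1), mul_pos hx0 hαpos, sq_nonneg z]
  have hfd : ∀ z : ℝ, HasDerivAt (fun z : ℝ => 1 - x * z * (1 - α * z))
      (x * (2*α*z - 1)) z := by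
    intro z
    have h1 : HasDerivAt (fun z : ℝ => x * z) x z := by
      simpa using (hasDerivAt_id z).const_mul x
    have h2 : HasDerivAt (fun z : ℝ => 1 - α * z) (-α) z := by
      simpa using ((hasDerivAt_id z).const_mul α).const_sub 1
    have := (h1.mul h2).const_sub 1
    exact this.congr_deriv (by ring)
  have hgd : ∀ z : ℝ, HasDerivAt (fun z => Real.log (1 - x * z * (1 - α * z)))
      (x * (2*α*z - 1) / (1 - x * z * (1 - α * z))) z :=
    fun z => (hfd z).log (ne_of_gt (hfpos z))
  have hderiv : deriv (fun z => Real.log (1 - x * z * (1 - α * z)))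
      = fun z => x * (2*α*z - 1) / (1 - x * z * (1 - α * z)) :=
    funext fun z => (hgd z).deriv
  have hd2 : ∀ z : ℝ, HasDerivAt (fun z => x * (2*α*z - 1) / (1 - x * z * (1 - α * z)))
      ((2*x*α * (1 - x * z * (1 - α * z)) - x * (2*α*z - 1) * (x * (2*α*z - 1)))
        / (1 - x * z * (1 - α * z))^2) z := by
    intro z
    have hnum : HasDerivAt (fun z : ℝ => x * (2*α*z - 1)) (2*x*α) z := by
      have := (((hasDerivAt_id z).const_mul (2*α)).sub_const 1).const_mul x
      exact this.congr_deriv (by ring)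
    exact hnum.div (hfd z) (ne_of_gt (hfpos z))
  apply convexOn_of_deriv2_nonneg' (convex_Icc 0 1)
  · exact fun z _ => (hgd z).differentiableAt.differentiableWithinAt
  · rw [hderiv]
    exact fun z _ => (hd2 z).differentiableAt.differentiableWithinAt
  · intro z hz
    have hz0 := hz.1
    have hz1 := hz.2
    have : deriv^[2] (fun z => Real.log (1 - x * z * (1 - α * z))) z
        = (2*x*α * (1 - x * z * (1 - α * z)) - x * (2*α*z - 1) * (x * (2*α*z - 1)))
          / (1 - x * z * (1 - α * z))^2 := by
      rw [Function.iterate_succ, Function.iterate_one, Function.comp_apply, hderiv,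
        (hd2 z).deriv]
    rw [this]
    apply div_nonneg _ (sq_nonneg _)
    have hαz : α * z ≤ 1 := by nlinarith
    nlinarith [mul_pos hx0 hαpos, mul_nonneg (mul_nonneg hx0.le hαpos.le) hz0,
      mul_nonneg (mul_nonneg (mul_nonneg hx0.le hαpos.le) hz0) (sub_nonneg.2 hαz)]
end

section
/- Let x ∈ (0,1), let ã : [0,1] → [0,1] satisfy ã(0)=1, continuity, and convexity of z ↦ ln(1 - x z ã(z)) on [0,1]. Then for any y_1,...,y_m ∈ [0,1] with ∑_i y_i ≤ Y ≤ 1, ∏_{i=1}^m (1 - x y_i ã(y_i)) ≥ e^{-xY}. -/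
open Filter Topology

theorem stmt_11 (x : ℝ) (hx : x ∈ Set.Ioo (0:ℝ) 1)
    (a : ℝ → ℝ) (ha01 : ∀ z ∈ Set.Icc (0:ℝ) 1, a z ∈ Set.Icc (0:ℝ) 1)
    (ha0 : a 0 = 1) (hacont : ContinuousOn a (Set.Icc 0 1))
    (hconv : ConvexOn ℝ (Set.Icc (0:ℝ) 1) (fun z => Real.log (1 - x * z * a z)))
    (m : ℕ) (y : ℕ → ℝ) (hy : ∀ i < m, y i ∈ Set.Icc (0:ℝ) 1)
    (Y : ℝ) (hY : ∑ i ∈ Finset.range m, y i ≤ Y) (hY1 : Y ≤ 1) :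
    ∏ i ∈ Finset.range m, (1 - x * y i * a (y i)) ≥ Real.exp (-x * Y) := by
  obtain ⟨hx0, hx1⟩ := hx
  set g : ℝ → ℝ := fun z => Real.log (1 - x * z * a z) with hgdef
  have hg0 : g 0 = 0 := by simp [hgdef]
  -- key pointwise inequality
  have key : ∀ z ∈ Set.Icc (0:ℝ) 1, Real.exp (-(x*z)) ≤ 1 - x * z * a z := by
    intro z hz
    obtain ⟨hz0, hz1⟩ := hz
    rcases eq_or_lt_of_le hz0 with h0 | hzpos
    · simp [← h0]
    · have haz := ha01 z ⟨hz0, hz1⟩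
      have hpos : 0 < 1 - x * z * a z := by
        have h1 : x * z * a z ≤ x * z * 1 :=
          mul_le_mul_of_nonneg_left haz.2 (by positivity)
        have h2 : x * z ≤ x * 1 := mul_le_mul_of_nonneg_left hz1 hx0.le
        nlinarith
      set L := 𝓝[Set.Ioc (0:ℝ) z] (0:ℝ) with hL
      haveI hNB : L.NeBot := by
        rw [hL]
        apply mem_closure_iff_nhdsWithin_neBot.1
        rw [closure_Ioc hzpos.ne]
        exact ⟨le_rfl, hzpos.le⟩
      -- a tends to 1 within L
      have hta : Tendsto a L (𝓝 1) := by
        have h := hacont 0 ⟨le_rfl, zero_le_one⟩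
        rw [ContinuousWithinAt, ha0] at h
        exact h.mono_left (nhdsWithin_mono 0
          (Set.Ioc_subset_Icc_self.trans (Set.Icc_subset_Icc_right hz1)))
      have hid : Tendsto (fun t : ℝ => t) L (𝓝 0) :=
        Filter.tendsto_id.mono_left nhdsWithin_le_nhds
      have htu0 : Tendsto (fun t => x * t * a t) L (𝓝 0) := by
        have h : Tendsto (fun t : ℝ => x * t * a t) L (𝓝 (x * 0 * 1)) :=
          (tendsto_const_nhds.mul hid).mul hta
        simpa using h
      have hmem : ∀ᶠ t in L, t ∈ Set.Ioc (0:ℝ) z := self_mem_nhdsWithin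
      have hagt : ∀ᶠ t in L, (1:ℝ)/2 < a t := hta.eventually (eventually_gt_nhds (by norm_num))
      have hune : ∀ᶠ t in L, x * t * a t ≠ 0 := by
        filter_upwards [hmem, hagt] with t ht hat
        have : 0 < x * t * a t := mul_pos (mul_pos hx0 ht.1) (by linarith)
        exact this.ne'
      have htu : Tendsto (fun t => x * t * a t) L (𝓝[≠] (0:ℝ)) := by
        rw [tendsto_nhdsWithin_iff]
        exact ⟨htu0, hune⟩
      -- log(1-u)/u → -1
      have hlog : Tendsto (fun u : ℝ => Real.log (1 - u) / u) (𝓝[≠] (0:ℝ)) (𝓝 (-1)) := by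
        have h2 : HasDerivAt (fun u : ℝ => 1 - u) (-1) 0 := by
          simpa using (hasDerivAt_id (0:ℝ)).const_sub 1
        have h3 := (Real.hasDerivAt_log (by norm_num : (1:ℝ) - 0 ≠ 0)).comp 0 h2
        have h1 : HasDerivAt (fun u : ℝ => Real.log (1 - u)) (-1) 0 := h3.congr_deriv (by norm_num)
        have h4 := hasDerivAt_iff_tendsto_slope.1 h1
        refine h4.congr' ?_
        filter_upwards with u
        simp [slope_def_field]
      have hcomp : Tendsto (fun t => Real.log (1 - x * t * a t) / (x * t * a t)) L (𝓝 (-1)) :=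
        hlog.comp htu
      have hxa : Tendsto (fun t => x * a t) L (𝓝 x) := by
        have h : Tendsto (fun t : ℝ => x * a t) L (𝓝 (x * 1)) :=
          tendsto_const_nhds.mul hta
        simpa using h
      have htF : Tendsto (fun t => (z/t) * g t) L (𝓝 (-(x*z))) := by
        have h5 : Tendsto (fun t => z * (Real.log (1 - x * t * a t) / (x * t * a t)) * (x * a t))
            L (𝓝 (z * (-1) * x)) := (tendsto_const_nhds.mul hcomp).mul hxa
        have h6 : z * (-1) * x = -(x*z) := by ring
        rw [h6] at h5
        refine h5.congr' ?_
        filter_upwards [hmem, hagt] with t ht hat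
        have ht0 : t ≠ 0 := ht.1.ne'
        have hat0 : a t ≠ 0 := by linarith
        simp only [hgdef]
        field_simp
      -- slope bound from convexity
      have hslope : ∀ t ∈ Set.Ioc (0:ℝ) z, (z/t) * g t ≤ g z := by
        intro t ht
        have ht0 : 0 < t := ht.1
        have htz : t ≤ z := ht.2
        have hwa : (0:ℝ) ≤ 1 - t/z := by
          have : t/z ≤ 1 := (div_le_one hzpos).2 htz
          linarith
        have hwb : (0:ℝ) ≤ t/z := by positivity
        have hc := hconv.2 (Set.mem_Icc.2 ⟨le_rfl, zero_le_one⟩)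
          (Set.mem_Icc.2 ⟨hz0, hz1⟩) hwa hwb (by ring)
        have heq : (1 - t/z) • (0:ℝ) + (t/z) • z = t := by
          rw [smul_eq_mul, smul_eq_mul, mul_zero, zero_add, div_mul_cancel₀ t hzpos.ne']
        rw [heq] at hc
        have hgt : g t ≤ (t/z) * g z := by
          simpa [hgdef, smul_eq_mul] using hc
        have := mul_le_mul_of_nonneg_left hgt (le_of_lt (by positivity : (0:ℝ) < z/t))
        calc (z/t) * g t ≤ (z/t) * ((t/z) * g z) := this
          _ = g z := by field_simp
      have hle : -(x*z) ≤ g z := by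
        refine le_of_tendsto htF ?_
        filter_upwards [hmem] with t ht
        exact hslope t ht
      calc Real.exp (-(x*z)) ≤ Real.exp (g z) := Real.exp_le_exp.2 hle
        _ = 1 - x * z * a z := Real.exp_log hpos
  -- finish
  have h1 : Real.exp (-x * Y) ≤ Real.exp (-(x * ∑ i ∈ Finset.range m, y i)) := by
    apply Real.exp_le_exp.2
    nlinarith
  have h2 : Real.exp (-(x * ∑ i ∈ Finset.range m, y i))
      = ∏ i ∈ Finset.range m, Real.exp (-(x * y i)) := by
    rw [← Real.exp_sum]
    congr 1
    rw [Finset.mul_sum, ← Finset.sum_neg_distrib]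
  have h3 : ∏ i ∈ Finset.range m, Real.exp (-(x * y i))
      ≤ ∏ i ∈ Finset.range m, (1 - x * y i * a (y i)) := by
    apply Finset.prod_le_prod
    · intro i _; positivity
    · intro i hi
      exact key (y i) (hy i (Finset.mem_range.1 hi))
  calc Real.exp (-x * Y) ≤ Real.exp (-(x * ∑ i ∈ Finset.range m, y i)) := h1
    _ = ∏ i ∈ Finset.range m, Real.exp (-(x * y i)) := h2
    _ ≤ ∏ i ∈ Finset.range m, (1 - x * y i * a (y i)) := h3
end

section
/- Let Z_1,...,Z_k be {0,1}-valued random variables satisfying the negative correlation property: for every subset S ⊆ {1,...,k}, Pr[⋂_{i∈S} (Z_i = 0)] ≤ ∏_{i∈S} Pr[Z_i = 0]. Let P_1,...,P_k be independent Bernoulli random variables, independent of (Z_1,...,Z_k), with Pr[P_i = 1] = p_i. Then for every i ∈ {1,...,k}, E[∏_{j=1}^i (1 - Z_j P_j)] ≤ ∏_{j=1}^i (1 - p_j E[Z_j]). -/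
open MeasureTheory ProbabilityTheory

lemma aux_integrable {Ω : Type*} [MeasurableSpace Ω] (μ : Measure Ω) [IsProbabilityMeasure μ]
    {F : Ω → ℝ} (hm : Measurable F) (h0 : ∀ ω, 0 ≤ F ω) (h1 : ∀ ω, F ω ≤ 1) :
    Integrable F μ := by
  refine (integrable_const (1 : ℝ)).mono' hm.aestronglyMeasurable ?_
  filter_upwards with ω
  rw [Real.norm_eq_abs, abs_of_nonneg (h0 ω)]
  exact h1 ω

lemma aux_int01 {Ω : Type*} [MeasurableSpace Ω] (μ : Measure Ω) [IsProbabilityMeasure μ]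
    {F : Ω → ℝ} (hm : Measurable F) (h01 : ∀ ω, F ω = 0 ∨ F ω = 1) :
    ∫ ω, F ω ∂μ = (μ {ω | F ω = 1}).toReal := by
  have hset : MeasurableSet {ω | F ω = 1} := hm (measurableSet_singleton 1)
  have hF : ∀ ω, F ω = Set.indicator {ω | F ω = 1} (fun _ => (1:ℝ)) ω := by
    intro ω
    rcases h01 ω with h | h <;> simp [Set.indicator_apply, h, Set.mem_setOf_eq]
  calc ∫ ω, F ω ∂μ = ∫ ω, Set.indicator {ω | F ω = 1} (fun _ => (1:ℝ)) ω ∂μ :=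
        integral_congr_ae (ae_of_all _ hF)
    _ = (μ {ω | F ω = 1}).toReal := integral_indicator_one hset

lemma aux_int_prod {Ω : Type*} [MeasurableSpace Ω] (μ : Measure Ω) [IsProbabilityMeasure μ]
    (f : ℕ → Ω → ℝ) (hind : iIndepFun f μ)
    (hmeas : ∀ i, Measurable (f i)) (hnn : ∀ i ω, 0 ≤ f i ω) (s : Finset ℕ) :
    ∫ ω, ∏ j ∈ s, f j ω ∂μ = ∏ j ∈ s, ∫ ω, f j ω ∂μ := by
  classical
  induction s using Finset.induction_on with
  | empty => simp
  | @insert a s ha ih =>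
    have hI : IndepFun (∏ j ∈ s, f j) (f a) μ :=
      hind.indepFun_finsetProd_of_notMem hmeas ha
    have hprodmeas : Measurable (∏ j ∈ s, f j) := by
      have key : (∏ j ∈ s, f j) = fun a => ∏ j ∈ s, f j a :=
        funext fun a => Finset.prod_apply a s f
      rw [key]
      exact Finset.measurable_prod s (fun j _ => hmeas j)
    have := hI.symm.integral_mul_eq_mul_integral
      (hmeas a).aestronglyMeasurable hprodmeas.aestronglyMeasurable
    rw [Finset.prod_insert ha, ← ih]
    calc ∫ ω, ∏ j ∈ insert a s, f j ω ∂μ = ∫ ω, (f a * ∏ j ∈ s, f j) ω ∂μ := by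
          apply integral_congr_ae; filter_upwards with ω
          simp [Finset.prod_insert ha]
      _ = (∫ ω, f a ω ∂μ) * ∫ ω, (∏ j ∈ s, f j) ω ∂μ := this
      _ = (∫ ω, f a ω ∂μ) * ∫ ω, ∏ j ∈ s, f j ω ∂μ := by
          congr 1; apply integral_congr_ae; filter_upwards with ω; simp

theorem stmt_12 {Ω : Type*} [MeasurableSpace Ω] (μ : Measure Ω) [IsProbabilityMeasure μ]
    (k : ℕ) (Z P : ℕ → Ω → ℝ) (p : ℕ → ℝ)
    (hZmeas : ∀ i, Measurable (Z i)) (hPmeas : ∀ i, Measurable (P i))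
    (hZ01 : ∀ i ω, Z i ω = 0 ∨ Z i ω = 1)
    (hP01 : ∀ i ω, P i ω = 0 ∨ P i ω = 1)
    (hneg : ∀ S : Finset ℕ, S ⊆ Finset.range k →
      μ (⋂ i ∈ S, {ω | Z i ω = 0}) ≤ ∏ i ∈ S, μ {ω | Z i ω = 0})
    (hPind : iIndepFun P μ)
    (hPp : ∀ i, μ {ω | P i ω = 1} = ENNReal.ofReal (p i))
    (hPZ : IndepFun (fun ω (i : ℕ) => Z i ω) (fun ω (i : ℕ) => P i ω) μ) :
    ∀ i ≤ k, ∫ ω, ∏ j ∈ Finset.range i, (1 - Z j ω * P j ω) ∂μ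
      ≤ ∏ j ∈ Finset.range i, (1 - p j * ∫ ω, Z j ω ∂μ) := by
  classical
  intro i hik
  set e : ℕ → ℝ := fun j => ∫ ω, Z j ω ∂μ with he
  set p' : ℕ → ℝ := fun j => (μ {ω | P j ω = 1}).toReal with hp'
  have h01le : ∀ x : ℝ, x = 0 ∨ x = 1 → 0 ≤ x ∧ x ≤ 1 := by
    rintro x (rfl | rfl) <;> norm_num
  have heval : ∀ j, e j = (μ {ω | Z j ω = 1}).toReal := fun j =>
    aux_int01 μ (hZmeas j) (hZ01 j)
  have he0 : ∀ j, 0 ≤ e j := fun j => (heval j) ▸ ENNReal.toReal_nonneg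
  have htr1 : ∀ s : Set Ω, (μ s).toReal ≤ 1 := by
    intro s
    calc (μ s).toReal ≤ (1 : ENNReal).toReal :=
          ENNReal.toReal_mono ENNReal.one_ne_top prob_le_one
      _ = 1 := by simp
  have he1 : ∀ j, e j ≤ 1 := fun j => (heval j) ▸ htr1 _
  have hZmeas1 : ∀ j, MeasurableSet {ω | Z j ω = 1} := fun j =>
    hZmeas j (measurableSet_singleton 1)
  have hZcompl : ∀ j, {ω | Z j ω = 0} = {ω | Z j ω = 1}ᶜ := by
    intro j; ext ω; rcases hZ01 j ω with h | h <;> simp [h]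
  have hq : ∀ j, (μ {ω | Z j ω = 0}).toReal = 1 - e j := by
    intro j
    rw [hZcompl, prob_compl_eq_one_sub (hZmeas1 j),
      ENNReal.toReal_sub_of_le prob_le_one ENNReal.one_ne_top, heval j]
    simp
  have hp'0 : ∀ j, 0 ≤ p' j := fun j => ENNReal.toReal_nonneg
  have hp'1 : ∀ j, p' j ≤ 1 := fun j => htr1 _
  have hple : ∀ j, p j ≤ p' j := by
    intro j
    rw [hp']
    simp only [hPp j]
    rcases le_or_gt 0 (p j) with h | h
    · rw [ENNReal.toReal_ofReal h]
    · rw [ENNReal.ofReal_of_nonpos h.le]; simpa using h.le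
  set f : ℕ → Ω → ℝ := fun j ω => P j ω * (1 - Z j ω) with hf
  set g : ℕ → Ω → ℝ := fun j ω => 1 - P j ω with hg
  have hf01 : ∀ j ω, f j ω = 0 ∨ f j ω = 1 := by
    intro j ω
    rcases hP01 j ω with h | h <;> rcases hZ01 j ω with h' | h' <;> simp [hf, h, h']
  have hg01 : ∀ j ω, g j ω = 0 ∨ g j ω = 1 := by
    intro j ω; rcases hP01 j ω with h | h <;> simp [hg, h]
  have hfmeas : ∀ j, Measurable (f j) :=
    fun j => (hPmeas j).mul (measurable_const.sub (hZmeas j))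
  have hgmeas : ∀ j, Measurable (g j) :=
    fun j => measurable_const.sub (hPmeas j)
  -- expansion
  have expand : ∀ ω, ∏ j ∈ Finset.range i, (1 - Z j ω * P j ω)
      = ∑ T ∈ (Finset.range i).powerset,
          (∏ j ∈ T, f j ω) * ∏ j ∈ Finset.range i \ T, g j ω := by
    intro ω
    rw [← Finset.prod_add]
    exact Finset.prod_congr rfl fun j _ => by simp only [hf, hg]; ring
  have htermmeas : ∀ T : Finset ℕ, Measurable
      (fun ω => (∏ j ∈ T, f j ω) * ∏ j ∈ Finset.range i \ T, g j ω) := by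
    intro T
    exact (Finset.measurable_prod _ fun j _ => hfmeas j).mul
      (Finset.measurable_prod _ fun j _ => hgmeas j)
  have hterm0 : ∀ T : Finset ℕ, ∀ ω,
      0 ≤ (∏ j ∈ T, f j ω) * ∏ j ∈ Finset.range i \ T, g j ω := by
    intro T ω
    exact mul_nonneg (Finset.prod_nonneg fun j _ => (h01le _ (hf01 j ω)).1)
      (Finset.prod_nonneg fun j _ => (h01le _ (hg01 j ω)).1)
  have hterm1 : ∀ T : Finset ℕ, ∀ ω,
      (∏ j ∈ T, f j ω) * ∏ j ∈ Finset.range i \ T, g j ω ≤ 1 := by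
    intro T ω
    have h1 := Finset.prod_le_one (fun j _ => (h01le _ (hf01 j ω)).1)
      (fun j (_ : j ∈ T) => (h01le _ (hf01 j ω)).2)
    have h2 := Finset.prod_le_one (fun j _ => (h01le _ (hg01 j ω)).1)
      (fun j (_ : j ∈ Finset.range i \ T) => (h01le _ (hg01 j ω)).2)
    have h3 := Finset.prod_nonneg fun j (_ : j ∈ T) => (h01le _ (hf01 j ω)).1
    have h4 := Finset.prod_nonneg
      fun j (_ : j ∈ Finset.range i \ T) => (h01le _ (hg01 j ω)).1
    nlinarith
  have htermint : ∀ T : Finset ℕ, Integrable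
      (fun ω => (∏ j ∈ T, f j ω) * ∏ j ∈ Finset.range i \ T, g j ω) μ :=
    fun T => aux_integrable μ (htermmeas T) (hterm0 T) (hterm1 T)
  have hintP : ∀ j, ∫ ω, P j ω ∂μ = p' j := fun j => aux_int01 μ (hPmeas j) (hP01 j)
  have hint1P : ∀ j, ∫ ω, (1 - P j ω) ∂μ = 1 - p' j := by
    intro j
    rw [integral_sub (integrable_const 1)
      (aux_integrable μ (hPmeas j) (fun ω => (h01le _ (hP01 j ω)).1)
        (fun ω => (h01le _ (hP01 j ω)).2)), hintP j]
    simp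
  -- key per-term bound
  have keybound : ∀ T ∈ (Finset.range i).powerset,
      ∫ ω, (∏ j ∈ T, f j ω) * ∏ j ∈ Finset.range i \ T, g j ω ∂μ
        ≤ (∏ j ∈ T, (p' j * (1 - e j))) * ∏ j ∈ Finset.range i \ T, (1 - p' j) := by
    intro T hT
    have hTsub : T ⊆ Finset.range i := Finset.mem_powerset.mp hT
    set A : Ω → ℝ := fun ω => ∏ j ∈ T, (1 - Z j ω) with hA
    set B : Ω → ℝ := fun ω =>
      (∏ j ∈ T, P j ω) * ∏ j ∈ Finset.range i \ T, (1 - P j ω) with hB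
    have hAmeas : Measurable A :=
      Finset.measurable_prod _ fun j _ => measurable_const.sub (hZmeas j)
    have hBmeas : Measurable B :=
      (Finset.measurable_prod _ fun j _ => hPmeas j).mul
        (Finset.measurable_prod _ fun j _ => measurable_const.sub (hPmeas j))
    have hA01 : ∀ ω, A ω = 0 ∨ A ω = 1 := by
      intro ω
      by_cases hall : ∀ j ∈ T, Z j ω = 0
      · right; exact Finset.prod_eq_one fun j hj => by rw [hall j hj]; ring
      · left
        push_neg at hall
        obtain ⟨j, hj, hjne⟩ := hall
        have hj1 : Z j ω = 1 := (hZ01 j ω).resolve_left hjne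
        exact Finset.prod_eq_zero hj (by rw [hj1]; ring)
    have hAnn : ∀ ω, 0 ≤ A ω := fun ω => (h01le _ (hA01 ω)).1
    have hBnn : ∀ ω, 0 ≤ B ω := by
      intro ω
      exact mul_nonneg (Finset.prod_nonneg fun j _ => (h01le _ (hP01 j ω)).1)
        (Finset.prod_nonneg fun j _ => by
          rcases hP01 j ω with h | h <;> simp [h])
    -- independence of A and B
    have hAB : IndepFun A B μ := by
      have hφ : Measurable (fun v : ℕ → ℝ => ∏ j ∈ T, (1 - v j)) :=
        Finset.measurable_prod _ fun j _ => measurable_const.sub (measurable_pi_apply j)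
      have hψ : Measurable (fun v : ℕ → ℝ =>
          (∏ j ∈ T, v j) * ∏ j ∈ Finset.range i \ T, (1 - v j)) :=
        (Finset.measurable_prod _ fun j _ => measurable_pi_apply j).mul
          (Finset.measurable_prod _ fun j _ => measurable_const.sub (measurable_pi_apply j))
      exact hPZ.comp hφ hψ
    -- ∫ A
    have hintA : ∫ ω, A ω ∂μ = (μ (⋂ j ∈ T, {ω | Z j ω = 0})).toReal := by
      rw [aux_int01 μ hAmeas hA01]
      congr 1
      apply congrArg
      ext ω
      simp only [Set.mem_setOf_eq, Set.mem_iInter]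
      constructor
      · intro h j hj
        by_contra hne
        have hj1 : Z j ω = 1 := (hZ01 j ω).resolve_left hne
        have : A ω = 0 := Finset.prod_eq_zero hj (by rw [hj1]; ring)
        rw [this] at h; norm_num at h
      · intro h
        exact Finset.prod_eq_one fun j hj => by rw [h j hj]; ring
    have hintAle : ∫ ω, A ω ∂μ ≤ ∏ j ∈ T, (1 - e j) := by
      rw [hintA]
      have hsub : T ⊆ Finset.range k := hTsub.trans (Finset.range_subset_range.mpr hik)
      have hle := hneg T hsub
      have hprod_le : (∏ j ∈ T, μ {ω | Z j ω = 0}) ≤ 1 :=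
        Finset.prod_le_one (fun j _ => zero_le) (fun j _ => prob_le_one)
      have hne : (∏ j ∈ T, μ {ω | Z j ω = 0}) ≠ ⊤ :=
        ne_top_of_le_ne_top ENNReal.one_ne_top hprod_le
      calc (μ (⋂ j ∈ T, {ω | Z j ω = 0})).toReal
          ≤ (∏ j ∈ T, μ {ω | Z j ω = 0}).toReal := ENNReal.toReal_mono hne hle
        _ = ∏ j ∈ T, (μ {ω | Z j ω = 0}).toReal := ENNReal.toReal_prod _ _
        _ = ∏ j ∈ T, (1 - e j) := Finset.prod_congr rfl fun j _ => hq j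
    -- ∫ B
    have hintB : ∫ ω, B ω ∂μ
        = (∏ j ∈ T, p' j) * ∏ j ∈ Finset.range i \ T, (1 - p' j) := by
      set h : ℕ → Ω → ℝ :=
        fun j => (if j ∈ T then (id : ℝ → ℝ) else fun x => 1 - x) ∘ P j with hh
      have hgm : ∀ j, Measurable (if j ∈ T then (id : ℝ → ℝ) else fun x => 1 - x) := by
        intro j
        split
        · exact measurable_id
        · exact measurable_const.sub measurable_id
      have hhind : iIndepFun h μ := hPind.comp _ hgm
      have hhmeas : ∀ j, Measurable (h j) := fun j => (hgm j).comp (hPmeas j)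
      have hhnn : ∀ j ω, 0 ≤ h j ω := by
        intro j ω
        simp only [hh, Function.comp_apply]
        split
        · exact (h01le _ (hP01 j ω)).1
        · rcases hP01 j ω with h' | h' <;> simp [h']
      have hBeq : ∀ ω, B ω = ∏ j ∈ Finset.range i, h j ω := by
        intro ω
        have h1 : ∏ j ∈ T, P j ω = ∏ j ∈ T, h j ω :=
          Finset.prod_congr rfl fun j hj => by simp [hh, hj]
        have h2 : ∏ j ∈ Finset.range i \ T, (1 - P j ω)
            = ∏ j ∈ Finset.range i \ T, h j ω :=
          Finset.prod_congr rfl fun j hj => by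
            simp [hh, (Finset.mem_sdiff.mp hj).2]
        show (∏ j ∈ T, P j ω) * ∏ j ∈ Finset.range i \ T, (1 - P j ω)
            = ∏ j ∈ Finset.range i, h j ω
        rw [h1, h2, mul_comm, Finset.prod_sdiff hTsub]
      calc ∫ ω, B ω ∂μ = ∫ ω, ∏ j ∈ Finset.range i, h j ω ∂μ :=
            integral_congr_ae (ae_of_all _ hBeq)
        _ = ∏ j ∈ Finset.range i, ∫ ω, h j ω ∂μ :=
            aux_int_prod μ h hhind hhmeas hhnn _
        _ = (∏ j ∈ Finset.range i \ T, ∫ ω, h j ω ∂μ) * ∏ j ∈ T, ∫ ω, h j ω ∂μ :=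
            (Finset.prod_sdiff hTsub).symm
        _ = (∏ j ∈ Finset.range i \ T, (1 - p' j)) * ∏ j ∈ T, p' j := by
            congr 1
            · exact Finset.prod_congr rfl fun j hj => by
                simp only [hh, Function.comp_apply, if_neg (Finset.mem_sdiff.mp hj).2]
                exact hint1P j
            · exact Finset.prod_congr rfl fun j hj => by
                simp only [hh, Function.comp_apply, if_pos hj]
                exact hintP j
        _ = (∏ j ∈ T, p' j) * ∏ j ∈ Finset.range i \ T, (1 - p' j) := mul_comm _ _
    have hintBnn : 0 ≤ ∫ ω, B ω ∂μ := integral_nonneg hBnn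
    -- combine
    have hsplit : ∫ ω, (∏ j ∈ T, f j ω) * ∏ j ∈ Finset.range i \ T, g j ω ∂μ
        = (∫ ω, A ω ∂μ) * ∫ ω, B ω ∂μ := by
      have heq : ∀ ω, (∏ j ∈ T, f j ω) * ∏ j ∈ Finset.range i \ T, g j ω
          = A ω * B ω := by
        intro ω
        simp only [hf, hg, hA, hB, Finset.prod_mul_distrib]
        ring
      have hmul : ∫ ω, A ω * B ω ∂μ = (∫ ω, A ω ∂μ) * ∫ ω, B ω ∂μ := by
        have := hAB.integral_mul_eq_mul_integral hAmeas.aestronglyMeasurable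
          hBmeas.aestronglyMeasurable
        simpa [Pi.mul_apply] using this
      rw [integral_congr_ae (ae_of_all _ heq), hmul]
    rw [hsplit]
    calc (∫ ω, A ω ∂μ) * ∫ ω, B ω ∂μ
        ≤ (∏ j ∈ T, (1 - e j)) * ∫ ω, B ω ∂μ :=
          mul_le_mul_of_nonneg_right hintAle hintBnn
      _ = (∏ j ∈ T, (1 - e j)) *
            ((∏ j ∈ T, p' j) * ∏ j ∈ Finset.range i \ T, (1 - p' j)) := by rw [hintB]
      _ = (∏ j ∈ T, (p' j * (1 - e j))) * ∏ j ∈ Finset.range i \ T, (1 - p' j) := by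
          rw [Finset.prod_mul_distrib]; ring
  -- assemble
  calc ∫ ω, ∏ j ∈ Finset.range i, (1 - Z j ω * P j ω) ∂μ
      = ∫ ω, ∑ T ∈ (Finset.range i).powerset,
          (∏ j ∈ T, f j ω) * ∏ j ∈ Finset.range i \ T, g j ω ∂μ :=
        integral_congr_ae (ae_of_all _ expand)
    _ = ∑ T ∈ (Finset.range i).powerset,
          ∫ ω, (∏ j ∈ T, f j ω) * ∏ j ∈ Finset.range i \ T, g j ω ∂μ :=
        integral_finset_sum _ fun T _ => htermint T
    _ ≤ ∑ T ∈ (Finset.range i).powerset,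
          (∏ j ∈ T, (p' j * (1 - e j))) * ∏ j ∈ Finset.range i \ T, (1 - p' j) :=
        Finset.sum_le_sum keybound
    _ = ∏ j ∈ Finset.range i, (p' j * (1 - e j) + (1 - p' j)) :=
        (Finset.prod_add _ _ _).symm
    _ = ∏ j ∈ Finset.range i, (1 - p' j * e j) :=
        Finset.prod_congr rfl fun j _ => by ring
    _ ≤ ∏ j ∈ Finset.range i, (1 - p j * e j) := by
        apply Finset.prod_le_prod
        · intro j _
          have : p' j * e j ≤ 1 := mul_le_one₀ (hp'1 j) (he0 j) (he1 j)
          linarith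
        · intro j _
          have : p j * e j ≤ p' j * e j :=
            mul_le_mul_of_nonneg_right (hple j) (he0 j)
          linarith
end

section
/- Let h(z) := e^{-z/2} · ∫_0^1 e^{-2x(1-z)} dx = e^{-z/2} · (1 - e^{-2(1-z)})/(2(1-z)) for z ∈ [0,1). Then h(z) ≥ (1 - e^{-2})/2 for all z ∈ [0,1). -/
open Real intervalIntegral

private lemma integral_exp_mul' (a : ℝ) (ha : a ≠ 0) :
    ∫ x in (0:ℝ)..1, Real.exp (a * x) = (Real.exp a - 1) / a := by
  have hderiv : ∀ x ∈ Set.uIcc (0:ℝ) 1,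
      HasDerivAt (fun x => Real.exp (a * x) / a) (Real.exp (a * x)) x := by
    intro x _
    have h1 : HasDerivAt (fun x : ℝ => a * x) a x := by
      simpa using (hasDerivAt_id x).const_mul a
    have h2 := (h1.exp).div_const a
    exact h2.congr_deriv (mul_div_cancel_right₀ _ ha)
  have hint : IntervalIntegrable (fun x => Real.exp (a * x)) MeasureTheory.volume 0 1 :=
    (Real.continuous_exp.comp (continuous_const.mul continuous_id)).intervalIntegrable 0 1
  rw [intervalIntegral.integral_eq_sub_of_hasDerivAt hderiv hint]
  simp [mul_comm]
  ring

private lemma concave_key : ∀ c ∈ Set.Icc (0:ℝ) 1,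
    c * (Real.exp (1/2) - Real.exp (-3/2)) ≤ Real.exp (c/2) - Real.exp (-3*c/2) := by
  have hconc : ConcaveOn ℝ (Set.Icc (0:ℝ) 1)
      (fun x => Real.exp (x/2) - Real.exp (-3*x/2)) := by
    apply concaveOn_of_hasDerivWithinAt2_nonpos (f' := fun x =>
        1/2 * Real.exp (x/2) + 3/2 * Real.exp (-3*x/2))
      (f'' := fun x => 1/2 * (Real.exp (x/2) * (1/2)) + 3/2 * (Real.exp (-3*x/2) * (-3/2)))
      (convex_Icc 0 1)
    · exact (Real.continuous_exp.comp (by continuity)).sub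
        (Real.continuous_exp.comp (by continuity)) |>.continuousOn
    · intro x _
      have h1 : HasDerivAt (fun x : ℝ => x/2) (1/2) x := (hasDerivAt_id x).div_const 2
      have h2 : HasDerivAt (fun x : ℝ => -3*x/2) (-3/2) x := by
        simpa using ((hasDerivAt_id x).const_mul (-3)).div_const 2
      have := (h1.exp).sub (h2.exp)
      refine HasDerivAt.hasDerivWithinAt ?_
      convert this using 1
      · rfl
      · ring
    · intro x _
      have h1 : HasDerivAt (fun x : ℝ => x/2) (1/2) x := (hasDerivAt_id x).div_const 2
      have h2 : HasDerivAt (fun x : ℝ => -3*x/2) (-3/2) x := by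
        simpa using ((hasDerivAt_id x).const_mul (-3)).div_const 2
      have := ((h1.exp).const_mul (1/2:ℝ)).add ((h2.exp).const_mul (3/2:ℝ))
      exact this.hasDerivWithinAt
    · intro x hx
      rw [interior_Icc] at hx
      obtain ⟨hx0, hx1⟩ := hx
      have he : Real.exp (x/2) ≤ Real.exp (-3*x/2) * 9 := by
        rw [← Real.exp_log (by positivity : (0:ℝ) < Real.exp (-3*x/2) * 9)]
        apply Real.exp_le_exp.mpr
        rw [Real.log_mul (Real.exp_ne_zero _) (by norm_num), Real.log_exp]
        have h9 : Real.log 9 > 2 := by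
          have := Real.exp_one_lt_d9
          have h2 : Real.exp 2 < 9 := by
            have : Real.exp 2 = Real.exp 1 * Real.exp 1 := by
              rw [← Real.exp_add]; norm_num
            nlinarith [Real.exp_pos 1]
          calc (2:ℝ) = Real.log (Real.exp 2) := by rw [Real.log_exp]
            _ < Real.log 9 := Real.log_lt_log (Real.exp_pos 2) h2
        linarith
      nlinarith [Real.exp_pos (x/2), Real.exp_pos (-3*x/2), he]
  intro c hc
  have h01 : (0:ℝ) ∈ Set.Icc (0:ℝ) 1 := by norm_num
  have h11 : (1:ℝ) ∈ Set.Icc (0:ℝ) 1 := by norm_num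
  obtain ⟨hc0, hc1⟩ := hc
  have := hconc.2 h01 h11 (by linarith : (0:ℝ) ≤ 1 - c) hc0 (by ring : (1-c) + c = 1)
  simp only [smul_eq_mul] at this
  have e0 : Real.exp ((0:ℝ)/2) - Real.exp (-3*(0:ℝ)/2) = 0 := by norm_num
  have heq : (1-c) * 0 + c * 1 = c := by ring
  rw [heq] at this
  calc c * (Real.exp (1/2) - Real.exp (-3/2))
      = (1-c) * (Real.exp ((0:ℝ)/2) - Real.exp (-3*(0:ℝ)/2))
        + c * (Real.exp ((1:ℝ)/2) - Real.exp (-3*(1:ℝ)/2)) := by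
        rw [e0]; norm_num
    _ ≤ Real.exp (c/2) - Real.exp (-3*c/2) := this

theorem stmt_17 : ∀ z ∈ Set.Ico (0:ℝ) 1,
    (Real.exp (-z / 2) * ∫ x in (0:ℝ)..1, Real.exp (-2 * x * (1 - z)))
        = Real.exp (-z / 2) * (1 - Real.exp (-2 * (1 - z))) / (2 * (1 - z))
    ∧ Real.exp (-z / 2) * ∫ x in (0:ℝ)..1, Real.exp (-2 * x * (1 - z))
        ≥ (1 - Real.exp (-2)) / 2 := by
  intro z hz
  obtain ⟨hz0, hz1⟩ := hz
  set c : ℝ := 1 - z with hcz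
  have hc0 : 0 < c := by simp [hcz]; linarith
  have hc1 : c ≤ 1 := by simp [hcz]; linarith
  have ha : (-2 * c : ℝ) ≠ 0 := ne_of_lt (by nlinarith)
  have hfe : (fun x => Real.exp (-2 * x * (1 - z))) = fun x => Real.exp ((-2 * c) * x) := by
    funext x; congr 1; rw [hcz]; ring
  have hint : (∫ x in (0:ℝ)..1, Real.exp (-2 * x * (1 - z)))
      = (Real.exp (-2 * c) - 1) / (-2 * c) := by
    rw [hfe, integral_exp_mul' (-2 * c) ha]
  have part1 : Real.exp (-z / 2) * ∫ x in (0:ℝ)..1, Real.exp (-2 * x * (1 - z))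
      = Real.exp (-z / 2) * (1 - Real.exp (-2 * c)) / (2 * c) := by
    rw [hint]
    field_simp
    ring
  refine ⟨part1, ?_⟩
  rw [ge_iff_le, part1, div_le_div_iff₀ two_pos (by positivity)]
  have key := concave_key c ⟨hc0.le, hc1⟩
  have key2 := mul_le_mul_of_nonneg_right key (Real.exp_pos (-(1:ℝ)/2)).le
  have hA : Real.exp (c/2) * Real.exp (-(1:ℝ)/2) = Real.exp (-z/2) := by
    rw [← Real.exp_add]; congr 1; rw [hcz]; ring
  have hB : Real.exp (-3*c/2) * Real.exp (-(1:ℝ)/2)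
      = Real.exp (-z/2) * Real.exp (-2*c) := by
    rw [← Real.exp_add, ← Real.exp_add]; congr 1; rw [hcz]; ring
  have hC : Real.exp ((1:ℝ)/2) * Real.exp (-(1:ℝ)/2) = 1 := by
    rw [← Real.exp_add]; norm_num
  have hD : Real.exp ((-3:ℝ)/2) * Real.exp (-(1:ℝ)/2) = Real.exp (-2) := by
    rw [← Real.exp_add]; norm_num
  nlinarith [key2, hA, hB, hC, hD, hc0.le]
end
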